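/- Let n ≥ 0 be an integer. The function s_n(δ) is strictly convex on (0, n+1). -/

import Mathlib

open Real Finset

/-- Degree-n Taylor polynomial of `exp` at 0. -/
noncomputable def T (n : ℕ) (s : ℝ) : ℝ := ∑ k ∈ Finset.range (n + 1), s ^ k / (Nat.factorial k)

namespace Stmt9Aux



/-- factorial product -/
def F (N M p : ℕ) : ℕ := (N + p).factorial * (N + (M - p)).factorial

lemma Fsymm (N M p : ℕ) (hp : p ≤ M) : F N M (M - p) = F N M p := by
  unfold F
  rw [Nat.sub_sub_self hp, mul_comm]

lemma Fpos (N M p : ℕ) : 0 < F N M p := Nat.mul_pos (Nat.factorial_pos _) (Nat.factorial_pos _)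

lemma Fstep (N M p : ℕ) (h : 2 * p + 1 ≤ M) : F N M (p + 1) ≤ F N M p := by
  obtain ⟨q, hq1, hq2, hpq⟩ : ∃ q, M - (p + 1) = q ∧ M - p = q + 1 ∧ p ≤ q := ⟨M - (p+1), rfl, by omega, by omega⟩
  unfold F
  rw [hq1, hq2]
  have h1 : (N + (p + 1)).factorial = (N + p + 1) * (N + p).factorial := by
    rw [show N + (p+1) = (N + p) + 1 by ring, Nat.factorial_succ]
  have h2 : (N + (q + 1)).factorial = (N + q + 1) * (N + q).factorial := by
    rw [show N + (q+1) = (N + q) + 1 by ring, Nat.factorial_succ]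
  rw [h1, h2]
  have : (N + p + 1) ≤ (N + q + 1) := by omega
  calc (N + p + 1) * (N + p).factorial * (N + q).factorial
      ≤ (N + q + 1) * (N + p).factorial * (N + q).factorial := by
        exact Nat.mul_le_mul_right _ (Nat.mul_le_mul_right _ this)
    _ = (N + p).factorial * ((N + q + 1) * (N + q).factorial) := by ring

lemma Fwalk (N M : ℕ) : ∀ d p, 2 * (p + d) ≤ M → F N M (p + d) ≤ F N M p := by
  intro d
  induction d with
  | zero => intro p _; simp
  | succ d ih =>
    intro p h
    have h1 : F N M (p + d + 1) ≤ F N M (p + d) := Fstep N M (p + d) (by omega)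
    have h2 : F N M (p + d) ≤ F N M p := ih p (by omega)
    calc F N M (p + (d+1)) = F N M (p + d + 1) := by ring_nf
      _ ≤ F N M p := le_trans h1 h2

/-- key monotonicity: more central index gives smaller factorial product -/
lemma Fkey (N M i j : ℕ) (hi : i ≤ M) (hj : j ≤ M) (hij : i * (M - i) ≤ j * (M - j)) :
    F N M j ≤ F N M i := by
  -- reduce to i' = min i (M-i), j' = min j (M-j)
  set i' := min i (M - i) with hi'
  set j' := min j (M - j) with hj'
  have hFi : F N M i' = F N M i := by
    rcases min_choice i (M - i) with h | h
    · rw [hi', h]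
    · rw [hi', h, Fsymm _ _ _ hi]
  have hFj : F N M j' = F N M j := by
    rcases min_choice j (M - j) with h | h
    · rw [hj', h]
    · rw [hj', h, Fsymm _ _ _ hj]
  have hii : i * (M - i) = i' * (M - i') := by
    rcases min_choice i (M - i) with h | h
    · rw [hi', h]
    · rw [hi', h, Nat.sub_sub_self hi, mul_comm]
  have hjj : j * (M - j) = j' * (M - j') := by
    rcases min_choice j (M - j) with h | h
    · rw [hj', h]
    · rw [hj', h, Nat.sub_sub_self hj, mul_comm]
  have h2i : 2 * i' ≤ M := by omega
  have h2j : 2 * j' ≤ M := by omega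
  have hij' : i' ≤ j' := by
    rw [hii, hjj] at hij
    obtain ⟨A, hA⟩ : ∃ A, M - i' = A := ⟨_, rfl⟩
    obtain ⟨B, hB⟩ : ∃ B, M - j' = B := ⟨_, rfl⟩
    rw [hA] at hij
    rw [hB] at hij
    have c1 : i' + A = M := by omega
    have c2 : j' + B = M := by omega
    have c3 : i' ≤ A := by omega
    have c4 : j' ≤ B := by omega
    by_contra hc
    push_neg at hc
    zify at hij c1 c2 c3 c4 hc
    nlinarith [hij, hc, c1, c2, c3, c4]
  rw [← hFi, ← hFj]
  have := Fwalk N M (j' - i') i' (by omega)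
  rwa [Nat.add_sub_cancel' hij'] at this




noncomputable def bb (N k : ℕ) : ℝ := ((N + k).factorial : ℝ)⁻¹

noncomputable def uu (N M p : ℕ) : ℝ := bb N p * bb N (M - p)

noncomputable def vv (M p : ℕ) : ℝ := 6 * p * ((M : ℝ) - p) - (M : ℝ) * ((M : ℝ) - 1)

lemma bb_pos (N k : ℕ) : 0 < bb N k := by
  unfold bb
  positivity

lemma uu_pos (N M p : ℕ) : 0 < uu N M p := mul_pos (bb_pos _ _) (bb_pos _ _)

lemma uu_eq_inv_F (N M p : ℕ) : uu N M p = ((F N M p : ℝ))⁻¹ := by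
  unfold uu bb F
  push_cast
  rw [mul_inv]

lemma uu_symm (N M p : ℕ) (hp : p ≤ M) : uu N M (M - p) = uu N M p := by
  unfold uu
  rw [Nat.sub_sub_self hp, mul_comm]

lemma sum_id' (M : ℕ) : ∑ p ∈ range (M + 1), (p : ℝ) = M * (M + 1) / 2 := by
  induction M with
  | zero => simp
  | succ M ih =>
    rw [Finset.sum_range_succ, ih]
    push_cast
    ring

lemma sum_sq' (M : ℕ) : ∑ p ∈ range (M + 1), (p : ℝ) ^ 2 = M * (M + 1) * (2 * M + 1) / 6 := by
  induction M with
  | zero => simp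
  | succ M ih =>
    rw [Finset.sum_range_succ, ih]
    push_cast
    ring

lemma sum_vv (M : ℕ) : ∑ p ∈ range (M + 1), vv M p = 0 := by
  unfold vv
  have h1 := sum_id' M
  have h2 := sum_sq' M
  have : ∀ p ∈ range (M + 1),
      6 * (p:ℝ) * ((M : ℝ) - p) - (M : ℝ) * ((M : ℝ) - 1)
      = 6 * (M:ℝ) * p - 6 * (p:ℝ)^2 - (M : ℝ) * ((M : ℝ) - 1) := by
    intro p _; ring
  rw [Finset.sum_congr rfl this]
  rw [Finset.sum_sub_distrib, Finset.sum_sub_distrib, ← Finset.mul_sum, ← Finset.mul_sum, h1, h2]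
  rw [Finset.sum_const, Finset.card_range]
  push_cast
  ring




lemma sum_uv_nonneg (N M : ℕ) : 0 ≤ ∑ p ∈ range (M + 1), uu N M p * vv M p := by
  have hmono : MonovaryOn (uu N M) (vv M) (range (M + 1)) := by
    intro i hi j hj hv
    simp only [Finset.coe_range, Set.mem_Iio] at hi hj
    have hi' : i ≤ M := by omega
    have hj' : j ≤ M := by omega
    have hnat : i * (M - i) ≤ j * (M - j) := by
      have hci : ((i * (M - i) : ℕ) : ℝ) = i * ((M:ℝ) - i) := by
        push_cast [Nat.cast_sub hi']; ring
      have hcj : ((j * (M - j) : ℕ) : ℝ) = j * ((M:ℝ) - j) := by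
        push_cast [Nat.cast_sub hj']; ring
      have : (i:ℝ) * ((M:ℝ) - i) < (j:ℝ) * ((M:ℝ) - j) := by
        unfold vv at hv; linarith
      have := hci ▸ hcj ▸ this
      exact_mod_cast this.le
    have hF : F N M j ≤ F N M i := Fkey N M i j hi' hj' hnat
    rw [uu_eq_inv_F, uu_eq_inv_F]
    apply inv_anti₀
    · exact_mod_cast Fpos N M j
    · exact_mod_cast hF
  have h := hmono.sum_mul_sum_le_card_mul_sum
  rw [sum_vv, mul_zero] at h
  have hc : (0:ℝ) < ((range (M + 1)).card : ℝ) := by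
    simp [Finset.card_range]
    positivity
  exact (mul_nonneg_iff_of_pos_left hc).mp h


noncomputable def cc0 (n k : ℕ) : ℝ := ((n + 1 + k).factorial : ℝ)⁻¹
noncomputable def cc1 (n k : ℕ) : ℝ := ((k : ℝ) + 1) * ((n + 2 + k).factorial : ℝ)⁻¹
noncomputable def cc2 (n k : ℕ) : ℝ := ((k : ℝ) + 1) * ((k : ℝ) + 2) * ((n + 3 + k).factorial : ℝ)⁻¹

noncomputable def DD (n m : ℕ) : ℝ :=
  ∑ k ∈ range (m + 1), (2 * cc1 n k * cc1 n (m - k) - cc0 n k * cc2 n (m - k))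

lemma cc0_eq (n k : ℕ) : cc0 n k = bb (n+1) k := by
  unfold cc0 bb; norm_num
lemma cc1_eq (n k : ℕ) : cc1 n k = ((k:ℝ)+1) * bb (n+1) (k+1) := by
  unfold cc1 bb; ring_nf
lemma cc2_eq (n k : ℕ) : cc2 n k = ((k:ℝ)+1) * ((k:ℝ)+2) * bb (n+1) (k+2) := by
  unfold cc2 bb; ring_nf

lemma S1_eq (n m : ℕ) :
    ∑ k ∈ range (m + 1), cc1 n k * cc1 n (m - k)
      = ∑ p ∈ range (m + 3), (p : ℝ) * (((m + 2 - p : ℕ)) : ℝ) * uu (n+1) (m+2) p := by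
  symm
  rw [show m + 3 = (m + 2) + 1 by omega, Finset.sum_range_succ]
  have hlast : ((m+2 : ℕ) : ℝ) * (((m + 2 - (m+2) : ℕ)) : ℝ) * uu (n+1) (m+2) (m+2) = 0 := by
    simp
  rw [hlast, add_zero, show m + 2 = (m + 1) + 1 by omega, Finset.sum_range_succ']
  have hzero : ((0:ℕ) : ℝ) * (((m + 1 + 1 - 0 : ℕ)) : ℝ) * uu (n+1) (m+1+1) 0 = 0 := by simp
  rw [hzero, add_zero]
  apply Finset.sum_congr rfl
  intro k hk
  rw [Finset.mem_range] at hk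
  have hk' : k ≤ m := by omega
  rw [cc1_eq, cc1_eq]
  unfold uu
  have h1 : m - k + 1 = m + 1 + 1 - (k + 1) := by omega
  have h2 : ((m + 1 + 1 - (k+1) : ℕ) : ℝ) = ((m - k : ℕ) : ℝ) + 1 := by
    rw [← h1]; push_cast [Nat.cast_sub hk']; ring
  rw [h2, ← h1]
  push_cast
  ring

lemma S2_eq (n m : ℕ) :
    ∑ k ∈ range (m + 1), cc0 n k * cc2 n (m - k)
      = ∑ p ∈ range (m + 3), (((m + 2 - p : ℕ)) : ℝ) * ((((m + 2 - p : ℕ)) : ℝ) - 1) * uu (n+1) (m+2) p := by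
  symm
  rw [show m + 3 = (m + 2) + 1 by omega, Finset.sum_range_succ]
  have h1 : (((m + 2 - (m+2) : ℕ)) : ℝ) * ((((m + 2 - (m+2) : ℕ)) : ℝ) - 1) * uu (n+1) (m+2) (m+2) = 0 := by
    simp
  rw [h1, add_zero, show m + 2 = (m + 1) + 1 by omega, Finset.sum_range_succ]
  have h2 : (((m + 1 + 1 - (m+1) : ℕ)) : ℝ) * ((((m + 1 + 1 - (m+1) : ℕ)) : ℝ) - 1) *
      uu (n+1) (m+1+1) (m+1) = 0 := by
    norm_num
  rw [h2, add_zero]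
  apply Finset.sum_congr rfl
  intro k hk
  rw [Finset.mem_range] at hk
  have hk' : k ≤ m := by omega
  rw [cc0_eq, cc2_eq]
  unfold uu
  have e1 : m - k + 2 = m + 1 + 1 - k := by omega
  have e2 : ((m + 1 + 1 - k : ℕ) : ℝ) = ((m - k : ℕ) : ℝ) + 2 := by
    rw [← e1]; push_cast [Nat.cast_sub hk']; ring
  rw [e2, ← e1]
  ring

lemma S2_reflect (n m : ℕ) :
    ∑ p ∈ range (m + 3), (((m + 2 - p : ℕ)) : ℝ) * ((((m + 2 - p : ℕ)) : ℝ) - 1) * uu (n+1) (m+2) p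
      = ∑ p ∈ range (m + 3), (p : ℝ) * ((p : ℝ) - 1) * uu (n+1) (m+2) p := by
  rw [show m + 3 = (m+2) + 1 by omega]
  rw [← Finset.sum_range_reflect (fun p => (p : ℝ) * ((p : ℝ) - 1) * uu (n+1) (m+2) p) ((m+2)+1)]
  apply Finset.sum_congr rfl
  intro p hp
  rw [Finset.mem_range] at hp
  have hp' : p ≤ m + 2 := by omega
  rw [show m + 2 + 1 - 1 - p = m + 2 - p by omega]
  rw [uu_symm _ _ _ hp']

lemma DD_nonneg (n m : ℕ) : 0 ≤ DD n m := by
  have key : 2 * DD n m = ∑ p ∈ range (m + 3), uu (n+1) (m+2) p * vv (m+2) p := by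
    unfold DD
    rw [Finset.mul_sum]
    have expand : ∀ k ∈ range (m+1),
        2 * (2 * cc1 n k * cc1 n (m - k) - cc0 n k * cc2 n (m - k))
        = 4 * (cc1 n k * cc1 n (m - k)) - (cc0 n k * cc2 n (m-k)) - (cc0 n k * cc2 n (m-k)) := by
      intro k _; ring
    rw [Finset.sum_congr rfl expand, Finset.sum_sub_distrib, Finset.sum_sub_distrib,
      ← Finset.mul_sum, S1_eq, S2_eq]
    nth_rewrite 2 [S2_reflect]
    rw [Finset.mul_sum, ← Finset.sum_sub_distrib, ← Finset.sum_sub_distrib]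
    apply Finset.sum_congr rfl
    intro p hp
    rw [Finset.mem_range] at hp
    have hp' : p ≤ m + 2 := by omega
    have hc : ((m + 2 - p : ℕ) : ℝ) = ((m:ℝ) + 2) - p := by
      push_cast [Nat.cast_sub hp']; ring
    unfold vv
    rw [hc]
    push_cast
    ring
  have h := sum_uv_nonneg (n+1) (m+2)
  rw [show m + 2 + 1 = m + 3 by omega] at h
  linarith [key ▸ h]

lemma DD0_pos (n : ℕ) : 0 < DD n 0 := by
  unfold DD
  rw [Finset.sum_range_one]
  simp only [Nat.sub_zero]
  have e0 : cc0 n 0 = (((n+1).factorial : ℝ))⁻¹ := by unfold cc0; norm_num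
  have e1 : cc1 n 0 = (((n+2).factorial : ℝ))⁻¹ := by unfold cc1; norm_num
  have e2 : cc2 n 0 = 2 * (((n+3).factorial : ℝ))⁻¹ := by unfold cc2; norm_num
  rw [e0, e1, e2]
  have key : ((n+2).factorial : ℝ) * (n+2).factorial < ((n+1).factorial : ℝ) * (n+3).factorial := by
    have f2 : (n+2).factorial = (n+2) * (n+1).factorial := Nat.factorial_succ (n+1)
    have f3 : (n+3).factorial = (n+3) * (n+2).factorial := Nat.factorial_succ (n+2)
    rw [f2, f3, f2]
    push_cast
    have hf : (0:ℝ) < ((n+1).factorial : ℝ) := by positivity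
    nlinarith [mul_pos hf hf, hf]
  have hinv : (((n+1).factorial : ℝ) * (n+3).factorial)⁻¹ < (((n+2).factorial : ℝ) * (n+2).factorial)⁻¹ := by
    apply inv_strictAnti₀
    · positivity
    · exact key
  rw [mul_inv, mul_inv] at hinv
  have h1 : (0:ℝ) < (((n+1).factorial : ℝ))⁻¹ := by positivity
  nlinarith [hinv, h1]





lemma summable_pow_mul {c : ℕ → ℝ} (h0 : ∀ k, 0 ≤ c k) (hb : ∀ k, c k ≤ ((k.factorial : ℝ))⁻¹)
    (s : ℝ) : Summable (fun k => c k * s ^ k) := by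
  refine Summable.of_norm_bounded (Real.summable_pow_div_factorial |s|) ?_
  intro k
  rw [Real.norm_eq_abs, abs_mul, abs_of_nonneg (h0 k), abs_pow]
  calc c k * |s| ^ k ≤ ((k.factorial : ℝ))⁻¹ * |s| ^ k :=
        mul_le_mul_of_nonneg_right (hb k) (by positivity)
    _ = |s| ^ k / k.factorial := by rw [div_eq_mul_inv]; ring

lemma summable_norm_pow_mul {c : ℕ → ℝ} (h0 : ∀ k, 0 ≤ c k)
    (hb : ∀ k, c k ≤ ((k.factorial : ℝ))⁻¹) (s : ℝ) :
    Summable (fun k => ‖c k * s ^ k‖) := by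
  apply Summable.of_nonneg_of_le (fun k => norm_nonneg _) _
    (Real.summable_pow_div_factorial |s|)
  intro k
  rw [Real.norm_eq_abs, abs_mul, abs_of_nonneg (h0 k), abs_pow]
  calc c k * |s| ^ k ≤ ((k.factorial : ℝ))⁻¹ * |s| ^ k :=
        mul_le_mul_of_nonneg_right (hb k) (by positivity)
    _ = |s| ^ k / k.factorial := by rw [div_eq_mul_inv]; ring

lemma hasDerivAt_tsum_pow {c : ℕ → ℝ} (h0 : ∀ k, 0 ≤ c k)
    (hb : ∀ k, c k ≤ ((k.factorial : ℝ))⁻¹) (s : ℝ) :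
    HasDerivAt (fun y => ∑' k, c k * y ^ k) (∑' (k : ℕ), ((k : ℝ) + 1) * c (k + 1) * s ^ k) s := by
  set R : ℝ := |s| + 1 with hR
  have habs : (0:ℝ) ≤ |s| := abs_nonneg s
  have hR1 : 1 ≤ R := by rw [hR]; linarith
  have hR0 : 0 ≤ R := by linarith
  set u : ℕ → ℝ := fun k => ((k : ℝ) + 1) * R ^ k / k.factorial with hu_def
  have hu : Summable u := by
    apply Summable.of_nonneg_of_le (fun k => by positivity) _
      (Real.summable_pow_div_factorial (2 * R))
    intro k
    rw [hu_def]
    have h2 : ((k : ℝ) + 1) ≤ 2 ^ k := by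
      exact_mod_cast Nat.succ_le_of_lt (Nat.lt_two_pow_self (n := k))
    have : ((k : ℝ) + 1) * R ^ k ≤ 2 ^ k * R ^ k :=
      mul_le_mul_of_nonneg_right h2 (by positivity)
    calc ((k : ℝ) + 1) * R ^ k / k.factorial ≤ 2 ^ k * R ^ k / k.factorial := by
          apply div_le_div_of_nonneg_right this ?_ |>.trans_eq rfl
          · positivity
      _ = (2 * R) ^ k / k.factorial := by rw [mul_pow]
  have hbound : ∀ (k : ℕ), ∀ y ∈ Metric.ball (0:ℝ) R, ‖c k * ((k : ℝ) * y ^ (k - 1))‖ ≤ u k := by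
    intro k y hy
    have hyR : |y| ≤ R := by
      rw [Metric.mem_ball, Real.dist_eq, sub_zero] at hy
      linarith
    have hy0 : (0:ℝ) ≤ |y| := abs_nonneg y
    rw [norm_mul, norm_mul, norm_pow, Real.norm_eq_abs, Real.norm_eq_abs, Real.norm_eq_abs,
      abs_of_nonneg (h0 k), Nat.abs_cast]
    have h1 : |y| ^ (k - 1) ≤ R ^ k := by
      calc |y| ^ (k - 1) ≤ R ^ (k - 1) := pow_le_pow_left₀ hy0 hyR _
        _ ≤ R ^ k := pow_le_pow_right₀ hR1 (Nat.sub_le k 1)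
    calc c k * ((k : ℝ) * |y| ^ (k - 1)) ≤ ((k.factorial : ℝ))⁻¹ * (((k:ℝ) + 1) * R ^ k) := by
          apply mul_le_mul (hb k) ?_ (by positivity) (by positivity)
          have : (k : ℝ) ≤ (k : ℝ) + 1 := by linarith
          calc (k : ℝ) * |y| ^ (k - 1) ≤ ((k:ℝ)+1) * |y| ^ (k-1) :=
                mul_le_mul_of_nonneg_right this (by positivity)
            _ ≤ ((k:ℝ)+1) * R ^ k := mul_le_mul_of_nonneg_left h1 (by positivity)
      _ = u k := by rw [hu_def]; ring
  have hball : s ∈ Metric.ball (0:ℝ) R := by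
    rw [Metric.mem_ball, Real.dist_eq, sub_zero, hR]
    linarith
  have hder := hasDerivAt_tsum_of_isPreconnected hu Metric.isOpen_ball
    ((convex_ball (0:ℝ) R).isPreconnected)
    (g := fun k y => c k * y ^ k) (g' := fun k y => c k * ((k : ℝ) * y ^ (k - 1)))
    (fun k y _ => (hasDerivAt_pow k y).const_mul (c k)) hbound hball
    (summable_pow_mul h0 hb s) hball
  refine hder.congr_deriv (Eq.symm ?_)
  have hsum' : Summable (fun k => c k * ((k : ℝ) * s ^ (k - 1))) :=
    Summable.of_norm_bounded hu (fun k => hbound k s hball)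
  rw [Summable.tsum_eq_zero_add hsum']
  simp only [Nat.cast_zero, zero_mul, mul_zero, zero_add]
  apply tsum_congr
  intro k
  have hk : k + 1 - 1 = k := rfl
  rw [hk]
  push_cast
  ring


lemma cc0_nonneg (n : ℕ) : ∀ k, 0 ≤ cc0 n k := fun k => by unfold cc0; positivity
lemma cc1_nonneg (n : ℕ) : ∀ k, 0 ≤ cc1 n k := fun k => by unfold cc1; positivity
lemma cc2_nonneg (n : ℕ) : ∀ k, 0 ≤ cc2 n k := fun k => by unfold cc2; positivity

lemma cc0_le (n : ℕ) : ∀ k, cc0 n k ≤ ((k.factorial : ℝ))⁻¹ := by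
  intro k
  unfold cc0
  apply inv_anti₀ (by positivity)
  exact_mod_cast Nat.factorial_le (by omega)

lemma cc1_le (n : ℕ) : ∀ k, cc1 n k ≤ ((k.factorial : ℝ))⁻¹ := by
  intro k
  unfold cc1
  have h2 : ((n+2+k).factorial : ℝ)⁻¹ ≤ (((k+1).factorial : ℝ))⁻¹ := by
    apply inv_anti₀ (by positivity)
    exact_mod_cast Nat.factorial_le (by omega)
  calc ((k:ℝ)+1) * ((n+2+k).factorial : ℝ)⁻¹ ≤ ((k:ℝ)+1) * (((k+1).factorial : ℝ))⁻¹ :=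
        mul_le_mul_of_nonneg_left h2 (by positivity)
    _ = ((k.factorial : ℝ))⁻¹ := by
        rw [Nat.factorial_succ]
        push_cast
        rw [mul_inv, ← mul_assoc, mul_inv_cancel₀ (by positivity), one_mul]

lemma cc2_le (n : ℕ) : ∀ k, cc2 n k ≤ ((k.factorial : ℝ))⁻¹ := by
  intro k
  unfold cc2
  have h2 : ((n+3+k).factorial : ℝ)⁻¹ ≤ (((k+2).factorial : ℝ))⁻¹ := by
    apply inv_anti₀ (by positivity)
    exact_mod_cast Nat.factorial_le (by omega)
  calc ((k:ℝ)+1) * ((k:ℝ)+2) * ((n+3+k).factorial : ℝ)⁻¹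
      ≤ ((k:ℝ)+1) * ((k:ℝ)+2) * (((k+2).factorial : ℝ))⁻¹ :=
        mul_le_mul_of_nonneg_left h2 (by positivity)
    _ = ((k.factorial : ℝ))⁻¹ := by
        rw [show k + 2 = (k+1) + 1 by ring, Nat.factorial_succ, Nat.factorial_succ]
        push_cast
        rw [mul_inv, mul_inv, ← mul_assoc]
        have e1 : ((k:ℝ)+1+1) = ((k:ℝ)+2) := by ring
        rw [e1]
        field_simp

noncomputable def H0 (n : ℕ) (s : ℝ) : ℝ := ∑' (k : ℕ), cc0 n k * s ^ k
noncomputable def H1 (n : ℕ) (s : ℝ) : ℝ := ∑' (k : ℕ), cc1 n k * s ^ k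
noncomputable def H2 (n : ℕ) (s : ℝ) : ℝ := ∑' (k : ℕ), cc2 n k * s ^ k

lemma cc1_succ (n k : ℕ) : ((k:ℝ)+1) * cc0 n (k+1) = cc1 n k := by
  unfold cc0 cc1
  rw [show n+1+(k+1) = n+2+k by ring]

lemma cc2_succ (n k : ℕ) : ((k:ℝ)+1) * cc1 n (k+1) = cc2 n k := by
  unfold cc1 cc2
  rw [show n+2+(k+1) = n+3+k by ring]
  push_cast
  ring

lemma H0_hasDeriv (n : ℕ) (s : ℝ) : HasDerivAt (H0 n) (H1 n s) s := by
  have h := hasDerivAt_tsum_pow (cc0_nonneg n) (cc0_le n) s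
  have he : (∑' (k : ℕ), ((k:ℝ)+1) * cc0 n (k+1) * s ^ k) = H1 n s :=
    tsum_congr (fun k => by rw [cc1_succ])
  rw [he] at h
  exact h

lemma H1_hasDeriv (n : ℕ) (s : ℝ) : HasDerivAt (H1 n) (H2 n s) s := by
  have h := hasDerivAt_tsum_pow (cc1_nonneg n) (cc1_le n) s
  have he : (∑' (k : ℕ), ((k:ℝ)+1) * cc1 n (k+1) * s ^ k) = H2 n s :=
    tsum_congr (fun k => by rw [cc2_succ])
  rw [he] at h
  exact h

lemma H0_pos (n : ℕ) {s : ℝ} (hs : 0 ≤ s) : 0 < H0 n s := by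
  apply Summable.tsum_pos (summable_pow_mul (cc0_nonneg n) (cc0_le n) s)
    (fun k => mul_nonneg (cc0_nonneg n k) (pow_nonneg hs k)) 0
  simp only [pow_zero, mul_one]
  unfold cc0
  positivity

lemma H1_pos (n : ℕ) {s : ℝ} (hs : 0 ≤ s) : 0 < H1 n s := by
  apply Summable.tsum_pos (summable_pow_mul (cc1_nonneg n) (cc1_le n) s)
    (fun k => mul_nonneg (cc1_nonneg n k) (pow_nonneg hs k)) 0
  simp only [pow_zero, mul_one]
  unfold cc1
  positivity

lemma key_ineq (n : ℕ) {s : ℝ} (hs : 0 ≤ s) : H0 n s * H2 n s < 2 * (H1 n s * H1 n s) := by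
  have n0 := summable_norm_pow_mul (cc0_nonneg n) (cc0_le n) s
  have n1 := summable_norm_pow_mul (cc1_nonneg n) (cc1_le n) s
  have n2 := summable_norm_pow_mul (cc2_nonneg n) (cc2_le n) s
  have hA : H1 n s * H1 n s
      = ∑' m, ∑ k ∈ range (m+1), (cc1 n k * s ^ k) * (cc1 n (m - k) * s ^ (m - k)) :=
    tsum_mul_tsum_eq_tsum_sum_range_of_summable_norm n1 n1
  have hB : H0 n s * H2 n s
      = ∑' m, ∑ k ∈ range (m+1), (cc0 n k * s ^ k) * (cc2 n (m - k) * s ^ (m - k)) :=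
    tsum_mul_tsum_eq_tsum_sum_range_of_summable_norm n0 n2
  have sA : Summable (fun m => ∑ k ∈ range (m+1), (cc1 n k * s ^ k) * (cc1 n (m-k) * s ^ (m-k))) :=
    (summable_norm_sum_mul_range_of_summable_norm n1 n1).of_norm
  have sB : Summable (fun m => ∑ k ∈ range (m+1), (cc0 n k * s ^ k) * (cc2 n (m-k) * s ^ (m-k))) :=
    (summable_norm_sum_mul_range_of_summable_norm n0 n2).of_norm
  have hterm : ∀ m, 2 * (∑ k ∈ range (m+1), (cc1 n k * s ^ k) * (cc1 n (m-k) * s ^ (m-k)))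
      - (∑ k ∈ range (m+1), (cc0 n k * s ^ k) * (cc2 n (m-k) * s ^ (m-k))) = DD n m * s ^ m := by
    intro m
    unfold DD
    rw [Finset.sum_mul, Finset.mul_sum, ← Finset.sum_sub_distrib]
    apply Finset.sum_congr rfl
    intro k hk
    rw [Finset.mem_range] at hk
    have hpow : s ^ k * s ^ (m - k) = s ^ m := by
      rw [← pow_add]
      congr 1
      omega
    calc 2 * (cc1 n k * s ^ k * (cc1 n (m-k) * s ^ (m-k)))
          - cc0 n k * s ^ k * (cc2 n (m-k) * s ^ (m-k))
        = (2 * cc1 n k * cc1 n (m-k) - cc0 n k * cc2 n (m-k)) * (s ^ k * s ^ (m-k)) := by ring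
      _ = (2 * cc1 n k * cc1 n (m-k) - cc0 n k * cc2 n (m-k)) * s ^ m := by rw [hpow]
  have hsum2 : Summable (fun m => DD n m * s ^ m) := ((sA.mul_left 2).sub sB).congr hterm
  have hpos : 0 < ∑' m, DD n m * s ^ m := by
    apply Summable.tsum_pos hsum2 (fun m => mul_nonneg (DD_nonneg n m) (pow_nonneg hs m)) 0
    simpa using DD0_pos n
  have heq : ∑' m, DD n m * s ^ m
      = 2 * (H1 n s * H1 n s) - H0 n s * H2 n s := by
    rw [← tsum_congr hterm, Summable.tsum_sub (sA.mul_left 2) sB, tsum_mul_left, ← hA, ← hB]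
  linarith [heq ▸ hpos]

lemma exp_identity (n : ℕ) (s : ℝ) : Real.exp s = T n s + s ^ (n+1) * H0 n s := by
  have hexp : Real.exp s = ∑' (k : ℕ), s ^ k / k.factorial := by
    rw [Real.exp_eq_exp_ℝ, NormedSpace.exp_eq_tsum_div]
  have hsum : Summable (fun k : ℕ => s ^ k / (k.factorial : ℝ)) :=
    Real.summable_pow_div_factorial s
  have hsplit := Summable.sum_add_tsum_nat_add (f := fun k : ℕ => s ^ k / (k.factorial : ℝ)) (n+1) hsum
  have htail : (∑' (k : ℕ), s ^ (k + (n+1)) / ((k + (n+1)).factorial : ℝ))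
      = s ^ (n+1) * H0 n s := by
    unfold H0
    rw [← tsum_mul_left]
    apply tsum_congr
    intro k
    unfold cc0
    rw [show k + (n+1) = n+1+k by ring, pow_add, div_eq_mul_inv]
    ring
  have hT : T n s = ∑ k ∈ range (n+1), s ^ k / (k.factorial : ℝ) := rfl
  rw [hexp, ← hsplit, htail, hT]

noncomputable def G (n : ℕ) (s : ℝ) : ℝ := ((n.factorial : ℝ) * H0 n s)⁻¹

noncomputable def G1 (n : ℕ) (s : ℝ) : ℝ :=
  -((n.factorial : ℝ) * H1 n s) / ((n.factorial : ℝ) * H0 n s) ^ 2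

noncomputable def G2 (n : ℕ) (s : ℝ) : ℝ :=
  (-((n.factorial : ℝ) * H2 n s) * (((n.factorial : ℝ) * H0 n s) ^ 2)
    - -((n.factorial : ℝ) * H1 n s) *
        ((2 : ℕ) * ((n.factorial : ℝ) * H0 n s) ^ 1 * ((n.factorial : ℝ) * H1 n s)))
    / (((n.factorial : ℝ) * H0 n s) ^ 2) ^ 2

lemma fact_pos (n : ℕ) : (0:ℝ) < (n.factorial : ℝ) := by positivity

lemma G_hasDeriv (n : ℕ) {s : ℝ} (hs : 0 < s) : HasDerivAt (G n) (G1 n s) s := by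
  have hne : (n.factorial : ℝ) * H0 n s ≠ 0 := by
    have := H0_pos n hs.le
    positivity
  have hH : HasDerivAt (fun y => (n.factorial : ℝ) * H0 n y) ((n.factorial : ℝ) * H1 n s) s :=
    (H0_hasDeriv n s).const_mul _
  exact hH.inv hne

lemma G1_hasDeriv (n : ℕ) {s : ℝ} (hs : 0 < s) : HasDerivAt (G1 n) (G2 n s) s := by
  have hne : (n.factorial : ℝ) * H0 n s ≠ 0 := by
    have := H0_pos n hs.le
    positivity
  have hnum : HasDerivAt (fun y => -((n.factorial : ℝ) * H1 n y))
      (-((n.factorial : ℝ) * H2 n s)) s := ((H1_hasDeriv n s).const_mul _).neg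
  have hden0 : HasDerivAt (fun y => (n.factorial : ℝ) * H0 n y) ((n.factorial : ℝ) * H1 n s) s :=
    (H0_hasDeriv n s).const_mul _
  have hden : HasDerivAt (fun y => ((n.factorial : ℝ) * H0 n y) ^ 2)
      ((2:ℕ) * ((n.factorial : ℝ) * H0 n s) ^ 1 * ((n.factorial : ℝ) * H1 n s)) s :=
    hden0.pow 2
  have hden_ne : ((n.factorial : ℝ) * H0 n s) ^ 2 ≠ 0 := pow_ne_zero _ hne
  exact hnum.div hden hden_ne

lemma G1_neg (n : ℕ) {s : ℝ} (hs : 0 < s) : G1 n s < 0 := by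
  unfold G1
  have h0 := H0_pos n hs.le
  have h1 := H1_pos n hs.le
  have hf := fact_pos n
  apply div_neg_of_neg_of_pos
  · nlinarith
  · positivity

lemma G2_pos (n : ℕ) {s : ℝ} (hs : 0 < s) : 0 < G2 n s := by
  unfold G2
  have h0 := H0_pos n hs.le
  have h1 := H1_pos n hs.le
  have hk := key_ineq n hs.le
  have hf := fact_pos n
  have hsub : 0 < 2 * (H1 n s * H1 n s) - H0 n s * H2 n s := by linarith
  apply div_pos
  · push_cast
    nlinarith [mul_pos (pow_pos hf 3) (mul_pos h0 hsub)]
  · positivity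

lemma G_contOn (n : ℕ) : ContinuousOn (G n) (Set.Ioi (0:ℝ)) := fun x hx =>
  ((G_hasDeriv n (Set.mem_Ioi.mp hx)).continuousAt).continuousWithinAt

lemma G_deriv_eq (n : ℕ) {x : ℝ} (hx : 0 < x) : deriv (G n) x = G1 n x :=
  (G_hasDeriv n hx).deriv

lemma G_deriv2_eq (n : ℕ) {x : ℝ} (hx : 0 < x) : deriv (deriv (G n)) x = G2 n x := by
  have hev : deriv (G n) =ᶠ[nhds x] G1 n := by
    filter_upwards [isOpen_Ioi.mem_nhds (Set.mem_Ioi.mpr hx)] with y hy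
    exact G_deriv_eq n (Set.mem_Ioi.mp hy)
  rw [Filter.EventuallyEq.deriv_eq hev]
  exact (G1_hasDeriv n hx).deriv

lemma G_strictAnti (n : ℕ) : StrictAntiOn (G n) (Set.Ioi (0:ℝ)) := by
  apply strictAntiOn_of_deriv_neg (convex_Ioi 0) (G_contOn n)
  intro x hx
  rw [interior_Ioi] at hx
  rw [G_deriv_eq n (Set.mem_Ioi.mp hx)]
  exact G1_neg n (Set.mem_Ioi.mp hx)

lemma G_strictConvex (n : ℕ) : StrictConvexOn ℝ (Set.Ioi (0:ℝ)) (G n) := by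
  apply strictConvexOn_of_deriv2_pos (convex_Ioi 0) (G_contOn n)
  intro x hx
  rw [interior_Ioi] at hx
  have : deriv^[2] (G n) x = deriv (deriv (G n)) x := rfl
  rw [this, G_deriv2_eq n (Set.mem_Ioi.mp hx)]
  exact G2_pos n (Set.mem_Ioi.mp hx)

end Stmt9Aux

open Stmt9Aux in
theorem stmt9 (n : ℕ) (sn : ℝ → ℝ)
    (hsn : ∀ δ ∈ Set.Ioo (0 : ℝ) ((n : ℝ) + 1), 0 < sn δ ∧
      Real.exp (sn δ) = T n (sn δ) + (sn δ) ^ (n + 1) / (δ * Nat.factorial n)) :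
    StrictConvexOn ℝ (Set.Ioo (0 : ℝ) ((n : ℝ) + 1)) sn := by
  have key : ∀ δ ∈ Set.Ioo (0 : ℝ) ((n : ℝ) + 1), 0 < sn δ ∧ G n (sn δ) = δ := by
    intro δ hδ
    obtain ⟨hpos, heq⟩ := hsn δ hδ
    refine ⟨hpos, ?_⟩
    have hid := exp_identity n (sn δ)
    have hδ0 : (0:ℝ) < δ := hδ.1
    have hf := fact_pos n
    have hsN : (0:ℝ) < (sn δ) ^ (n+1) := by positivity
    have h1 : (sn δ) ^ (n+1) / (δ * (n.factorial : ℝ)) = (sn δ) ^ (n+1) * H0 n (sn δ) := by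
      linarith [heq, hid]
    rw [div_eq_iff (by positivity : δ * (n.factorial : ℝ) ≠ 0)] at h1
    have h3 : H0 n (sn δ) * (δ * (n.factorial : ℝ)) = 1 := by
      have h4 : (sn δ) ^ (n+1) * (H0 n (sn δ) * (δ * (n.factorial : ℝ)))
          = (sn δ) ^ (n+1) * 1 := by
        rw [mul_one]
        nlinarith [h1]
      exact mul_left_cancel₀ (ne_of_gt hsN) h4
    have h5 : H0 n (sn δ) = (δ * (n.factorial : ℝ))⁻¹ := eq_inv_of_mul_eq_one_left h3
    unfold G
    rw [h5]
    rw [mul_inv, inv_inv]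
    field_simp
  refine ⟨convex_Ioo _ _, ?_⟩
  intro x hx y hy hxy a b ha hb hab
  obtain ⟨hx1, hx2⟩ := key x hx
  obtain ⟨hy1, hy2⟩ := key y hy
  have hmem : a • x + b • y ∈ Set.Ioo (0:ℝ) ((n:ℝ)+1) :=
    (convex_Ioo (0:ℝ) ((n:ℝ)+1)) hx hy ha.le hb.le hab
  obtain ⟨hz1, hz2⟩ := key _ hmem
  have hsneq : sn x ≠ sn y := fun h => hxy (by rw [← hx2, ← hy2, h])
  have hcomb : a • sn x + b • sn y ∈ Set.Ioi (0:ℝ) := by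
    simp only [smul_eq_mul, Set.mem_Ioi]
    exact add_pos (mul_pos ha hx1) (mul_pos hb hy1)
  have hGc := (G_strictConvex n).2 (Set.mem_Ioi.mpr hx1) (Set.mem_Ioi.mpr hy1) hsneq ha hb hab
  rw [hx2, hy2] at hGc
  have hGc2 : G n (a • sn x + b • sn y) < G n (sn (a • x + b • y)) := by
    calc G n (a • sn x + b • sn y) < a • x + b • y := hGc
      _ = G n (sn (a • x + b • y)) := hz2.symm
  by_contra hcon
  push_neg at hcon
  have hle : G n (sn (a • x + b • y)) ≤ G n (a • sn x + b • sn y) := by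
    rcases eq_or_lt_of_le hcon with h | h
    · rw [h]
    · exact ((G_strictAnti n) hcomb (Set.mem_Ioi.mpr hz1) h).le
  linarith
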